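/- arXiv:0809.2345 — 3 statements merged into one kernel-verified Lean document; each statement's English description precedes it below -/
import Mathlib

section
/- Let z₁ ∈ 𝔻 with z₁ ≠ 0 and w₁ ∈ ℂ with |w₁| < 1. Then: (i) there exists s ∈ 𝒮₁ with s(z₁) = w₁; (ii) the set {x ∈ ℂ : ℙ_x is positive semidefinite} equals the closed disk {x ∈ ℂ : |x − c| ≤ r}, where c = w₁·(1 − |z₁|⁴)/(1 − |z₁|⁴·|w₁|²) and r = |z₁|²·(1 − |w₁|²)/(1 − |z₁|⁴·|w₁|²); (iii) ℙ_x is positive definite if and only if |x − c| < r. -/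
open scoped ComplexConjugate ComplexOrder
open Matrix

noncomputable section

namespace CNP

def unitDisk : Set ℂ := {z : ℂ | ‖z‖ < 1}

def MemS1 (s : ℂ → ℂ) : Prop :=
  DifferentiableOn ℂ s unitDisk ∧ (∀ z ∈ unitDisk, ‖s z‖ ≤ 1) ∧ deriv s 0 = 0

def Kab (α β z w : ℂ) : ℂ :=
  (α + β * z) * conj (α + β * w) + z ^ 2 * conj w ^ 2 / (1 - z * conj w)

def opNormM {m n : Type*} [Fintype m] [Fintype n] [DecidableEq n] (A : Matrix m n ℂ) : ℝ :=
  ‖LinearMap.toContinuousLinearMap (Matrix.toEuclideanLin A)‖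

def matDeriv {k l : ℕ} (F : ℂ → Matrix (Fin k) (Fin l) ℂ) (w : ℂ) : Matrix (Fin k) (Fin l) ℂ :=
  Matrix.of fun i j => deriv (fun z => F z i j) w

def matHol {k l : ℕ} (F : ℂ → Matrix (Fin k) (Fin l) ℂ) : Prop :=
  ∀ i j, DifferentiableOn ℂ (fun z => F z i j) unitDisk

def MemS1M {k : ℕ} (S : ℂ → Matrix (Fin k) (Fin k) ℂ) : Prop :=
  matHol S ∧ (∀ z ∈ unitDisk, opNormM (S z) ≤ 1) ∧ matDeriv S 0 = 0

def MemG {l l' : ℕ} (α β : Matrix (Fin l') (Fin l) ℂ) : Prop :=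
  α * αᴴ + β * βᴴ = 1 ∧ Function.Injective α.mulVec

def KabM {l l' : ℕ} (α β : Matrix (Fin l') (Fin l) ℂ) (z w : ℂ) : Matrix (Fin l) (Fin l) ℂ :=
  (αᴴ + conj w • βᴴ) * (α + z • β) + (conj w ^ 2 * z ^ 2 / (1 - conj w * z)) • 1

def taylorCoeff {k l : ℕ} (F : ℂ → Matrix (Fin k) (Fin l) ℂ) (m : ℕ) :
    Matrix (Fin k) (Fin l) ℂ :=
  Matrix.of fun i j => iteratedDeriv m (fun z => F z i j) 0 / m.factorial

def frobSq {k l : ℕ} (A : Matrix (Fin k) (Fin l) ℂ) : ℝ :=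
  ∑ i, ∑ j, Complex.normSq (A i j)

def MemH2 {k l : ℕ} (F : ℂ → Matrix (Fin k) (Fin l) ℂ) : Prop :=
  matHol F ∧ Summable fun m => frobSq (taylorCoeff F m)

def h2inner {k l : ℕ} (F G : ℂ → Matrix (Fin k) (Fin l) ℂ) : ℂ :=
  ∑' m : ℕ, Matrix.trace ((taylorCoeff G m)ᴴ * taylorCoeff F m)

def h2norm {k l : ℕ} (F : ℂ → Matrix (Fin k) (Fin l) ℂ) : ℝ :=
  Real.sqrt (∑' m : ℕ, frobSq (taylorCoeff F m))

def MemH2ab {k l l' : ℕ} (α β : Matrix (Fin l') (Fin l) ℂ)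
    (F : ℂ → Matrix (Fin k) (Fin l) ℂ) : Prop :=
  MemH2 F ∧ ∃ U : Matrix (Fin k) (Fin l') ℂ, F 0 = U * α ∧ matDeriv F 0 = U * β

def MemHinf {k l : ℕ} (F : ℂ → Matrix (Fin k) (Fin l) ℂ) : Prop :=
  matHol F ∧ ∃ C : ℝ, ∀ z ∈ unitDisk, opNormM (F z) ≤ C

def hinfNorm {k l : ℕ} (F : ℂ → Matrix (Fin k) (Fin l) ℂ) : ℝ :=
  sSup ((fun z => opNormM (F z)) '' unitDisk)

def MemHinf1 {k : ℕ} (S : ℂ → Matrix (Fin k) (Fin k) ℂ) : Prop :=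
  MemHinf S ∧ matDeriv S 0 = 0

def blaschke {m : ℕ} (lam : Fin m → ℂ) (r : Fin m → ℕ) (z : ℂ) : ℂ :=
  ∏ i, ((z - lam i) / (1 - conj (lam i) * z)) ^ r i

def BD {n : ℕ} (z : Fin n → ℂ) (ζ : ℂ) : ℂ :=
  ∏ i, (ζ - z i) / (1 - conj (z i) * ζ)


/-- The 5×5 Pick matrix `ℙ_x` for the one-point constrained problem. -/
def P8 (z₁ w₁ x : ℂ) : Matrix (Fin 5) (Fin 5) ℂ :=
  !![((1 - ‖w₁‖ ^ 2 : ℝ) : ℂ) / ((1 - ‖z₁‖ ^ 2 : ℝ) : ℂ),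
        1 - w₁ * conj x, z₁ * (1 - w₁ * conj x), 0, 0;
     1 - conj w₁ * x, 1, 0, x, 0;
     conj z₁ * (1 - conj w₁ * x), 0, 1, 0, x;
     0, conj x, 0, 1, 0;
     0, 0, conj x, 0, 1]

/-!
For (i), `ζ ↦ φ_{w₁}(φ_{z₁²}(ζ²))`, where `φ_a` is the involutive disc automorphism exchanging
`a` and `0`, maps `𝔻` into `𝔻`, has vanishing derivative at `0` because it factors through `ζ²`,
and sends `z₁` to `w₁`.

For (ii) and (iii), positive semidefiniteness forces `|x| < 1`: the test vector `e₁ - x̄ e₃`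
gives `1 - |x|² ≥ 0`, and for `|x| = 1` it lies in the kernel, which would force `w₁ x̄ = 1`.
For `|x| < 1`, completing squares against the invertible lower right block writes
`(1 - |z₁|²)(1 - |x|²) ⟪y, ℙ_x y⟫` as `G |y₀|²` plus a positive combination of squares that
vanish together exactly on one line through a vector with `y₀ ≠ 0`, where
`G = (1 - |w₁|²)(1 - |x|²) - (1 - |z₁|⁴) |1 - w₁ x̄|²`. Hence `ℙ_x ≥ 0` iff `G ≥ 0` and
`ℙ_x > 0` iff `G > 0`, and completing the square in `x` gives
`G = (1 - |z₁|⁴ |w₁|²) (r² - |x - c|²)`.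
-/

open Complex

def mobius (a w : ℂ) : ℂ := (a - w) / (1 - conj a * w)

lemma normSq_one_sub_conj_mul_sub_normSq_sub (a b : ℂ) :
    normSq (1 - conj a * b) - normSq (a - b) = (1 - normSq a) * (1 - normSq b) := by
  simp only [normSq_apply, sub_re, sub_im, mul_re, mul_im, one_re, one_im, conj_re, conj_im]
  ring

lemma normSq_lt_one_iff {a : ℂ} : normSq a < 1 ↔ ‖a‖ < 1 := by
  rw [← Complex.sq_norm, sq_lt_one_iff₀ (norm_nonneg a)]

lemma normSq_sub_lt_normSq_one_sub_conj_mul {a b : ℂ} (ha : ‖a‖ < 1) (hb : ‖b‖ < 1) :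
    normSq (a - b) < normSq (1 - conj a * b) := by
  have := normSq_one_sub_conj_mul_sub_normSq_sub a b
  nlinarith [normSq_lt_one_iff.2 ha, normSq_lt_one_iff.2 hb]

lemma one_sub_conj_mul_ne_zero {a b : ℂ} (ha : ‖a‖ < 1) (hb : ‖b‖ < 1) :
    1 - conj a * b ≠ 0 :=
  normSq_pos.1 ((normSq_nonneg _).trans_lt (normSq_sub_lt_normSq_one_sub_conj_mul ha hb))

lemma norm_mobius_lt_one {a b : ℂ} (ha : ‖a‖ < 1) (hb : ‖b‖ < 1) : ‖mobius a b‖ < 1 := by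
  have h := normSq_sub_lt_normSq_one_sub_conj_mul ha hb
  rw [← normSq_lt_one_iff, mobius, normSq_div, div_lt_one (h.trans_le' (normSq_nonneg _))]
  exact h

lemma differentiableAt_mobius {a b : ℂ} (ha : ‖a‖ < 1) (hb : ‖b‖ < 1) :
    DifferentiableAt ℂ (mobius a) b :=
  ((differentiableAt_const a).sub differentiableAt_id).div
    ((differentiableAt_const 1).sub (differentiableAt_id.const_mul _))
    (one_sub_conj_mul_ne_zero ha hb)

lemma mobius_self (a : ℂ) : mobius a a = 0 := by simp [mobius]

lemma mobius_zero (a : ℂ) : mobius a 0 = a := by simp [mobius]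

lemma deriv_comp_sq_zero {f : ℂ → ℂ} (hf : DifferentiableAt ℂ f 0) :
    deriv (fun z => f (z ^ 2)) 0 = 0 := by
  have := (zero_pow two_ne_zero (M₀ := ℂ)).symm ▸ hf
  show deriv (f ∘ fun z => z ^ 2) 0 = 0
  simpa using (this.hasDerivAt.comp (0 : ℂ) (hasDerivAt_pow 2 (0 : ℂ))).deriv

theorem exists_memS1_apply_eq {z w : ℂ} (hz : ‖z‖ < 1) (hw : ‖w‖ < 1) :
    ∃ s, MemS1 s ∧ s z = w := by
  have hz2 : ‖z ^ 2‖ < 1 := by rw [norm_pow]; exact pow_lt_one₀ (norm_nonneg z) hz two_ne_zero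
  set g := fun ζ => mobius w (mobius (z ^ 2) ζ)
  have hg : ∀ ζ, ‖ζ‖ < 1 → ‖g ζ‖ < 1 ∧ DifferentiableAt ℂ g ζ := fun ζ hζ =>
    ⟨norm_mobius_lt_one hw (norm_mobius_lt_one hz2 hζ),
      (differentiableAt_mobius hw (norm_mobius_lt_one hz2 hζ)).comp ζ
        (differentiableAt_mobius hz2 hζ)⟩
  have hsq : ∀ ζ ∈ unitDisk, ‖ζ ^ 2‖ < 1 := fun ζ hζ => by
    rw [norm_pow]; exact pow_lt_one₀ (norm_nonneg ζ) hζ two_ne_zero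
  refine ⟨fun ζ => g (ζ ^ 2), ⟨fun ζ hζ => ?_, fun ζ hζ => (hg _ (hsq ζ hζ)).1.le, ?_⟩, ?_⟩
  · exact ((hg _ (hsq ζ hζ)).2.comp ζ (differentiableAt_pow 2)).differentiableWithinAt
  · exact deriv_comp_sq_zero (hg 0 (by simp)).2
  · simp [g, mobius_self, mobius_zero]

lemma posSemidef_iff_of_smul_dotProduct_mulVec {n : Type*} [Fintype n] {A : Matrix n n ℂ}
    (hA : A.IsHermitian) {c : ℝ} (hc : 0 < c) {f : (n → ℂ) → ℝ}
    (hf : ∀ y, (c : ℂ) * (star y ⬝ᵥ A *ᵥ y) = f y) :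
    A.PosSemidef ↔ ∀ y, 0 ≤ f y := by
  have hq : ∀ y, star y ⬝ᵥ A *ᵥ y = ((f y / c : ℝ) : ℂ) := fun y => by
    rw [ofReal_div, eq_div_iff (ofReal_ne_zero.2 hc.ne'), mul_comm, hf]
  simp only [posSemidef_iff_dotProduct_mulVec, hq, zero_le_real, le_div_iff₀ hc, zero_mul, hA,
    true_and]

lemma posDef_iff_of_smul_dotProduct_mulVec {n : Type*} [Fintype n] {A : Matrix n n ℂ}
    (hA : A.IsHermitian) {c : ℝ} (hc : 0 < c) {f : (n → ℂ) → ℝ}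
    (hf : ∀ y, (c : ℂ) * (star y ⬝ᵥ A *ᵥ y) = f y) :
    A.PosDef ↔ ∀ y, y ≠ 0 → 0 < f y := by
  have hq : ∀ y, star y ⬝ᵥ A *ᵥ y = ((f y / c : ℝ) : ℂ) := fun y => by
    rw [ofReal_div, eq_div_iff (ofReal_ne_zero.2 hc.ne'), mul_comm, hf]
  simp only [posDef_iff_dotProduct_mulVec, hq, zero_lt_real, div_pos_iff_of_pos_right hc, hA,
    true_and]

section PickMatrix

variable (z w x : ℂ)

lemma P8_isHermitian : (P8 z w x).IsHermitian := by
  ext i j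
  fin_cases i <;> fin_cases j <;> simp [P8, conjTranspose_apply]

/-- `(1 - |z|²)(1 - |x|²)` times the Schur complement of the lower right block
`[[1, x], [x̄, 1]] ⊗ 1₂` of `ℙ_x`. -/
def pickSchur : ℝ :=
  (1 - normSq w) * (1 - normSq x) - (1 - normSq z ^ 2) * normSq (1 - w * conj x)

def pickSOS (y : Fin 5 → ℂ) : ℝ :=
  pickSchur z w x * normSq (y 0)
    + (1 - normSq z) * (normSq ((1 - normSq x) * y 1 + conj (1 - w * conj x) * y 0)
        + normSq ((1 - normSq x) * y 2 + conj z * conj (1 - w * conj x) * y 0))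
    + (1 - normSq z) * (1 - normSq x) *
        (normSq (y 3 + conj x * y 1) + normSq (y 4 + conj x * y 2))

variable {z x}

lemma P8_quadForm (hz : normSq z ≠ 1) (y : Fin 5 → ℂ) :
    (((1 - normSq z) * (1 - normSq x) : ℝ) : ℂ) * (star y ⬝ᵥ P8 z w x *ᵥ y) =
      pickSOS z w x y := by
  have hz' : (1 : ℂ) - z * conj z ≠ 0 := by
    rw [mul_conj, ← ofReal_one, ← ofReal_sub, ofReal_ne_zero, sub_ne_zero]
    exact hz.symm
  have hw' : (1 - (‖w‖ : ℂ) ^ 2) = 1 - w * conj w := by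
    rw [← ofReal_pow, Complex.sq_norm, mul_conj]
  have hz'' : (1 - (‖z‖ : ℂ) ^ 2) = 1 - z * conj z := by
    rw [← ofReal_pow, Complex.sq_norm, mul_conj]
  simp only [P8, pickSOS, pickSchur, mulVec, dotProduct, Fin.sum_univ_five]
  simp
  push_cast [← mul_conj]
  rw [hw', hz'']
  simp only [map_sub, map_add, map_mul, map_one, conj_conj]
  field_simp
  ring

variable {w}

variable (z w x) in
/-- Up to the factor `1 - |x|²`, the minimiser `(1, -M⁻¹ b)` of the form for fixed `y 0`, where
`M` is the lower right block of `ℙ_x` and `b` the rest of its first column. -/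
def pickExtremal : Fin 5 → ℂ :=
  ![(1 - normSq x : ℂ), -conj (1 - w * conj x), -conj z * conj (1 - w * conj x),
    conj x * conj (1 - w * conj x), conj x * conj z * conj (1 - w * conj x)]

lemma pickSOS_pickExtremal :
    pickSOS z w x (pickExtremal z w x) = pickSchur z w x * (1 - normSq x) ^ 2 := by
  have hv : normSq (1 - normSq x : ℂ) = (1 - normSq x) ^ 2 := by
    rw [← ofReal_one, ← ofReal_sub, normSq_ofReal, sq]
  simp [pickSOS, pickExtremal, hv]
  ring_nf
  simp

variable (z w) in
lemma pickExtremal_ne_zero (hx : normSq x < 1) : pickExtremal z w x ≠ 0 := by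
  intro h
  have h0 := congrFun h 0
  simp only [pickExtremal, cons_val_zero, Pi.zero_apply] at h0
  exact (sub_pos.2 hx).ne' (by exact_mod_cast h0)

lemma normSq_lt_one_of_posSemidef_P8 (hw : normSq w < 1) (h : (P8 z w x).PosSemidef) :
    normSq x < 1 := by
  set v : Fin 5 → ℂ := ![0, 1, 0, -conj x, 0]
  have hv : star v ⬝ᵥ P8 z w x *ᵥ v = ((1 - normSq x : ℝ) : ℂ) := by
    simp [v, P8, mulVec, dotProduct, Fin.sum_univ_five, ← mul_conj]
    ring
  have hx : normSq x ≤ 1 := by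
    have := h.dotProduct_mulVec_nonneg v
    rw [hv, zero_le_real] at this
    linarith
  refine hx.lt_of_ne fun hx1 => ?_
  have hker : P8 z w x *ᵥ v = 0 :=
    (h.dotProduct_mulVec_zero_iff v).1 (by rw [hv, hx1]; simp)
  have hq : w * conj x = 1 := by
    have := congrFun hker 0
    simp [v, P8, mulVec, dotProduct, Fin.sum_univ_five] at this
    linear_combination -this
  have := congrArg normSq hq
  rw [normSq_mul, normSq_conj, hx1, map_one, mul_one] at this
  linarith

lemma normSq_lt_one_of_pickSchur_nonneg (hz : normSq z < 1) (hw : normSq w < 1)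
    (hG : 0 ≤ pickSchur z w x) : normSq x < 1 := by
  by_contra! hx
  unfold pickSchur at hG
  have hz2 : 0 < 1 - normSq z ^ 2 := by nlinarith [normSq_nonneg z]
  have hq : normSq (1 - w * conj x) = 0 := by nlinarith [normSq_nonneg (1 - w * conj x)]
  have hwx := congrArg normSq (sub_eq_zero.1 (normSq_eq_zero.1 hq))
  rw [normSq_mul, normSq_conj, map_one] at hwx
  rw [hq, mul_zero, sub_zero] at hG
  nlinarith [normSq_nonneg w]

lemma pickSOS_nonneg (hz : normSq z < 1) (hx : normSq x < 1) (hG : 0 ≤ pickSchur z w x)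
    (y : Fin 5 → ℂ) : 0 ≤ pickSOS z w x y := by
  have hz' : 0 ≤ 1 - normSq z := by linarith
  have hx' : 0 ≤ 1 - normSq x := by linarith
  have hsum (a b : ℂ) : 0 ≤ normSq a + normSq b := add_nonneg (normSq_nonneg a) (normSq_nonneg b)
  exact add_nonneg (add_nonneg (mul_nonneg hG (normSq_nonneg _)) (mul_nonneg hz' (hsum _ _)))
    (mul_nonneg (mul_nonneg hz' hx') (hsum _ _))

lemma pickSOS_pos (hz : normSq z < 1) (hx : normSq x < 1) (hG : 0 < pickSchur z w x)
    {y : Fin 5 → ℂ} (hy : y ≠ 0) : 0 < pickSOS z w x y := by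
  refine (pickSOS_nonneg hz hx hG.le y).lt_of_ne fun h => hy ?_
  have hz' : 0 < 1 - normSq z := by linarith
  have hx' : 0 < 1 - normSq x := by linarith
  have hx'' : (1 - normSq x : ℂ) ≠ 0 := by exact_mod_cast hx'.ne'
  have hsum (a b : ℂ) : 0 ≤ normSq a + normSq b := add_nonneg (normSq_nonneg a) (normSq_nonneg b)
  unfold pickSOS at h
  have t0 := mul_nonneg hG.le (normSq_nonneg (y 0))
  obtain ⟨h012, h34⟩ := (add_eq_zero_iff_of_nonneg (add_nonneg t0 (mul_nonneg hz'.le (hsum _ _)))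
    (mul_nonneg (mul_pos hz' hx').le (hsum _ _))).1 h.symm
  obtain ⟨h0, h12⟩ := (add_eq_zero_iff_of_nonneg t0 (mul_nonneg hz'.le (hsum _ _))).1 h012
  rw [mul_eq_zero, or_iff_right hG.ne', normSq_eq_zero] at h0
  rw [mul_eq_zero, or_iff_right hz'.ne', add_eq_zero_iff_of_nonneg (normSq_nonneg _)
    (normSq_nonneg _), normSq_eq_zero, normSq_eq_zero] at h12
  rw [mul_eq_zero, or_iff_right (mul_pos hz' hx').ne', add_eq_zero_iff_of_nonneg (normSq_nonneg _)
    (normSq_nonneg _), normSq_eq_zero, normSq_eq_zero] at h34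
  simp only [h0, mul_zero, add_zero, mul_eq_zero, hx'', false_or] at h12
  obtain ⟨h1, h2⟩ := h12
  simp only [h1, h2, mul_zero, add_zero] at h34
  ext i
  fin_cases i <;> simp [h0, h1, h2, h34.1, h34.2]

lemma posSemidef_P8_iff (hz : normSq z < 1) (hw : normSq w < 1) :
    (P8 z w x).PosSemidef ↔ 0 ≤ pickSchur z w x := by
  have hform (hx : normSq x < 1) :=
    posSemidef_iff_of_smul_dotProduct_mulVec (P8_isHermitian z w x)
      (mul_pos (sub_pos.2 hz) (sub_pos.2 hx)) (P8_quadForm w hz.ne)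
  constructor
  · intro h
    have hx := normSq_lt_one_of_posSemidef_P8 hw h
    have hG := (hform hx).1 h (pickExtremal z w x)
    rw [pickSOS_pickExtremal] at hG
    exact nonneg_of_mul_nonneg_left hG (pow_pos (sub_pos.2 hx) 2)
  · intro hG
    have hx := normSq_lt_one_of_pickSchur_nonneg hz hw hG
    exact (hform hx).2 (pickSOS_nonneg hz hx hG)

lemma posDef_P8_iff (hz : normSq z < 1) (hw : normSq w < 1) :
    (P8 z w x).PosDef ↔ 0 < pickSchur z w x := by
  have hform (hx : normSq x < 1) :=
    posDef_iff_of_smul_dotProduct_mulVec (P8_isHermitian z w x)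
      (mul_pos (sub_pos.2 hz) (sub_pos.2 hx)) (P8_quadForm w hz.ne)
  constructor
  · intro h
    have hx := normSq_lt_one_of_posSemidef_P8 hw h.posSemidef
    have hG := (hform hx).1 h _ (pickExtremal_ne_zero z w hx)
    rw [pickSOS_pickExtremal] at hG
    exact pos_of_mul_pos_left hG (sq_nonneg _)
  · intro hG
    have hx := normSq_lt_one_of_pickSchur_nonneg hz hw hG.le
    exact (hform hx).2 fun _ hy => pickSOS_pos hz hx hG hy

end PickMatrix

lemma mul_pickSchur_eq (z w x : ℂ) :
    (1 - normSq z ^ 2 * normSq w) * pickSchur z w x =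
      (normSq z * (1 - normSq w)) ^ 2 -
        normSq (((1 - normSq z ^ 2 * normSq w : ℝ) : ℂ) * x -
          w * ((1 - normSq z ^ 2 : ℝ) : ℂ)) := by
  simp only [pickSchur, normSq_apply, sub_re, sub_im, mul_re, mul_im, one_re, one_im, conj_re,
    conj_im, ofReal_re, ofReal_im]
  ring

section Disk

variable {z w c : ℂ} {r : ℝ}

lemma one_sub_norm_pow_four_mul_sq_pos (hz : ‖z‖ < 1) (hw : ‖w‖ < 1) :
    0 < 1 - ‖z‖ ^ 4 * ‖w‖ ^ 2 :=
  sub_pos.2 (mul_lt_one_of_nonneg_of_lt_one_left (by positivity)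
    (pow_lt_one₀ (norm_nonneg z) hz four_ne_zero) (pow_le_one₀ (norm_nonneg w) hw.le))

lemma pickSchur_eq_of_center_radius (hD : 1 - ‖z‖ ^ 4 * ‖w‖ ^ 2 ≠ 0)
    (hc : c = w * ((1 - ‖z‖ ^ 4 : ℝ) : ℂ) / ((1 - ‖z‖ ^ 4 * ‖w‖ ^ 2 : ℝ) : ℂ))
    (hr : r = ‖z‖ ^ 2 * (1 - ‖w‖ ^ 2) / (1 - ‖z‖ ^ 4 * ‖w‖ ^ 2)) (x : ℂ) :
    pickSchur z w x = (1 - ‖z‖ ^ 4 * ‖w‖ ^ 2) * (r ^ 2 - ‖x - c‖ ^ 2) := by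
  have h4 : ‖z‖ ^ 4 = normSq z ^ 2 := by rw [← Complex.sq_norm, ← pow_mul]
  simp only [h4, Complex.sq_norm] at hD hc hr ⊢
  have hxc : ((1 - normSq z ^ 2 * normSq w : ℝ) : ℂ) * x - w * ((1 - normSq z ^ 2 : ℝ) : ℂ) =
      ((1 - normSq z ^ 2 * normSq w : ℝ) : ℂ) * (x - c) := by
    rw [hc]; field_simp
  have hG := mul_pickSchur_eq z w x
  rw [hxc, normSq_mul, normSq_ofReal] at hG
  rw [hr]
  field_simp
  linear_combination hG

end Disk

theorem stmt8_general (z₁ w₁ : ℂ) (hz : z₁ ∈ unitDisk) (hw : ‖w₁‖ < 1)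
    (c : ℂ) (r : ℝ)
    (hc : c = w₁ * ((1 - ‖z₁‖ ^ 4 : ℝ) : ℂ) /
      ((1 - ‖z₁‖ ^ 4 * ‖w₁‖ ^ 2 : ℝ) : ℂ))
    (hr : r = ‖z₁‖ ^ 2 * (1 - ‖w₁‖ ^ 2) /
      (1 - ‖z₁‖ ^ 4 * ‖w₁‖ ^ 2)) :
    (∃ s : ℂ → ℂ, MemS1 s ∧ s z₁ = w₁) ∧
    {x : ℂ | (P8 z₁ w₁ x).PosSemidef} = {x : ℂ | ‖x - c‖ ≤ r} ∧
    ∀ x : ℂ, (P8 z₁ w₁ x).PosDef ↔ ‖x - c‖ < r := by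
  have hz' := normSq_lt_one_iff.2 hz
  have hw' := normSq_lt_one_iff.2 hw
  have hD := one_sub_norm_pow_four_mul_sq_pos hz hw
  have hr0 : 0 ≤ r := hr ▸ div_nonneg
    (mul_nonneg (by positivity) (sub_nonneg.2 (pow_le_one₀ (norm_nonneg w₁) hw.le))) hD.le
  have hG := pickSchur_eq_of_center_radius hD.ne' hc hr
  refine ⟨exists_memS1_apply_eq hz hw, Set.ext fun x => (posSemidef_P8_iff hz' hw').trans ?_,
    fun x => (posDef_P8_iff hz' hw').trans ?_⟩
  · rw [hG, mul_nonneg_iff_of_pos_left hD, sub_nonneg]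
    exact sq_le_sq₀ (norm_nonneg _) hr0
  · rw [hG, mul_pos_iff_of_pos_left hD, sub_pos]
    exact sq_lt_sq₀ (norm_nonneg _) hr0

/-- Corollary 4.3.  For the one-point constrained Nevanlinna-Pick
problem a solution always exists, and the set of parameters `x` for which `ℙ_x` is
positive semidefinite (resp. positive definite) is the closed (resp. open) disk with
center `c` and radius `r`. -/
theorem stmt8 (z₁ w₁ : ℂ) (hz : z₁ ∈ unitDisk) (hz0 : z₁ ≠ 0) (hw : ‖w₁‖ < 1)
    (c : ℂ) (r : ℝ)
    (hc : c = w₁ * ((1 - ‖z₁‖ ^ 4 : ℝ) : ℂ) /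
      ((1 - ‖z₁‖ ^ 4 * ‖w₁‖ ^ 2 : ℝ) : ℂ))
    (hr : r = ‖z₁‖ ^ 2 * (1 - ‖w₁‖ ^ 2) /
      (1 - ‖z₁‖ ^ 4 * ‖w₁‖ ^ 2)) :
    (∃ s : ℂ → ℂ, MemS1 s ∧ s z₁ = w₁) ∧
    {x : ℂ | (P8 z₁ w₁ x).PosSemidef} = {x : ℂ | ‖x - c‖ ≤ r} ∧
    ∀ x : ℂ, (P8 z₁ w₁ x).PosDef ↔ ‖x - c‖ < r :=
  stmt8_general z₁ w₁ hz hw c r hc hr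

end CNP
end
end

section
/- Let 1 ≤ ℓ ≤ ℓ' ≤ k and (α,β) ∈ 𝔾(ℓ'×ℓ). Then for every w ∈ 𝔻 and X ∈ ℂ^{k×ℓ} the function z ↦ X·K^{α,β}(z,w) belongs to H²_{α,β}, and for every f ∈ H²_{α,β} one has ⟨f, X·K^{α,β}(·,w)⟩ = trace(X*·f(w)). Moreover, for every F ∈ (H∞_1)^{k×k} and every f ∈ H²_{α,β}: ⟨F·f, X·K^{α,β}(·,w)⟩ = ⟨f, (F(w)*·X)·K^{α,β}(·,w)⟩ (so the Hilbert-space adjoint of multiplication by F on H²_{α,β} maps X·K^{α,β}(·,w) to F(w)*·X·K^{α,β}(·,w)). -/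
open scoped ComplexConjugate ComplexOrder
open Matrix

noncomputable section

namespace CNP

/-!
The Taylor coefficients of `z ↦ X K^{α,β}(z,w)` are `X (α + wβ)ᴴ α`, `X (α + wβ)ᴴ β` and
`w̄ᵐ X` for `m ≥ 2`. Paired with those of `f`, the terms `m ≥ 2` are the terms of the Taylor
series of `trace (Xᴴ f(w))` at `0`, and the first two terms have the same sum as theirs because
`f(0) = Uα`, `f'(0) = Uβ` and `ααᴴ + ββᴴ = 1`. Since `F'(0) = 0`, the product `F f` satisfies the
same constraint with `U` replaced by `F(0) U`, so both sides of the adjoint formula equal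
`trace (Xᴴ F(w) f(w))`.
-/

open Filter Topology

lemma unitDisk_eq_ball : unitDisk = Metric.ball 0 1 := by
  ext z; simp [unitDisk]

lemma one_sub_conj_mul_ne_zero_s11 {w z : ℂ} (hw : w ∈ unitDisk) (hz : z ∈ unitDisk) :
    1 - conj w * z ≠ 0 := by
  refine sub_ne_zero.2 fun h => ?_
  have : ‖conj w * z‖ < 1 := by
    rw [norm_mul, Complex.norm_conj]
    exact mul_lt_one_of_nonneg_of_lt_one_left (norm_nonneg w) hw hz.le
  rw [← h, norm_one] at this
  exact lt_irrefl _ this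

lemma iteratedDeriv_affine_zero (a b : ℂ) (m : ℕ) :
    iteratedDeriv m (fun z => a + z * b) 0 = if m = 0 then a else if m = 1 then b else 0 := by
  match m with
  | 0 => simp
  | 1 => simp [iteratedDeriv_one]
  | n + 2 =>
    have hderiv : deriv (fun z : ℂ => a + z * b) = fun _ => b := by
      funext z; simp
    simp [iteratedDeriv_succ', hderiv, iteratedDeriv_const]

lemma iteratedDeriv_inv_one_sub_mul_zero (v : ℂ) (m : ℕ) :
    iteratedDeriv m (fun z => (1 - v * z)⁻¹) 0 = m.factorial * v ^ m := by
  have hlin : (fun z => (1 - v * z)⁻¹) = fun z => (-v * z + 1)⁻¹ := by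
    funext z; ring_nf
  rw [iteratedDeriv_eq_iterate, hlin, iter_deriv_inv_linear]
  simp only [mul_zero, zero_add, _root_.one_zpow, mul_one]
  rw [mul_right_comm, ← mul_pow]
  simp [mul_comm]

lemma iteratedDeriv_quadratic_add_geometric (a b c v : ℂ) (m : ℕ) :
    iteratedDeriv m (fun z => a + z * b + v ^ 2 * z ^ 2 / (1 - v * z) * c) 0 / m.factorial
      = if m = 0 then a else if m = 1 then b else v ^ m * c := by
  have hgerm : (fun z => a + z * b + v ^ 2 * z ^ 2 / (1 - v * z) * c) =ᶠ[𝓝 0]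
      (fun z => (a - c) + z * (b - v * c)) + fun z => c * (1 - v * z)⁻¹ := by
    have : ∀ᶠ z in 𝓝 (0 : ℂ), 1 - v * z ≠ 0 :=
      (continuous_const.sub (continuous_const.mul continuous_id)).continuousAt.eventually_ne
        (by simp)
    filter_upwards [this] with z hz
    simp only [Pi.add_apply, div_eq_mul_inv]
    linear_combination (-c * (1 + v * z)) * mul_inv_cancel₀ hz
  have hinv : ContDiffAt ℂ m (fun z => (1 - v * z)⁻¹) 0 :=
    (contDiffAt_inv ℂ (by simp)).comp _ (by fun_prop)
  rw [hgerm.iteratedDeriv_eq, iteratedDeriv_add (by fun_prop) (contDiffAt_const.mul hinv),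
    iteratedDeriv_affine_zero, iteratedDeriv_const_mul_field, iteratedDeriv_inv_one_sub_mul_zero]
  have hfac : (m.factorial : ℂ) ≠ 0 := by exact_mod_cast m.factorial_ne_zero
  rcases m with _ | _ | m
  · simp
  · simp [mul_comm]
  · simp only [if_neg (by omega : m + 2 ≠ 0), if_neg (by omega : m + 2 ≠ 1), zero_add]
    field_simp

lemma HasSum.congr_of_two_le {α : Type*} [AddCommGroup α] [TopologicalSpace α]
    [IsTopologicalAddGroup α] {s t : ℕ → α} {a : α} (hs : HasSum s a)
    (h01 : t 0 + t 1 = s 0 + s 1) (h : ∀ n, 2 ≤ n → t n = s n) : HasSum t a := by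
  have hdiff : HasSum (t - s) 0 := by
    have := hasSum_sum_of_ne_finset_zero (f := t - s) (s := Finset.range 2)
      (L := .unconditional ℕ) fun n hn => by
        simp only [Finset.mem_range, not_lt] at hn
        simp [h n hn]
    simpa [Finset.sum_range_succ, sub_add_sub_comm, h01] using this
  simpa using hs.add hdiff

section Trace

variable {m n p R : Type*} [Fintype m] [Fintype n] [Fintype p] [DecidableEq p]
  [CommRing R] [StarRing R]

lemma trace_conjTranspose_mul_add_of_coisometry {α β : Matrix p n R}
    (hαβ : α * αᴴ + β * βᴴ = 1) (X : Matrix m n R) (U : Matrix m p R) (M : Matrix p n R) :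
    trace ((X * Mᴴ * α)ᴴ * (U * α)) + trace ((X * Mᴴ * β)ᴴ * (U * β)) = trace (Xᴴ * (U * M)) := by
  have hcycle : ∀ γ : Matrix p n R,
      trace ((X * Mᴴ * γ)ᴴ * (U * γ)) = trace (M * Xᴴ * U * (γ * γᴴ)) := fun γ => by
    rw [conjTranspose_mul, conjTranspose_mul, conjTranspose_conjTranspose, Matrix.mul_assoc,
      trace_mul_comm]
    simp only [Matrix.mul_assoc]
  rw [hcycle, hcycle, ← trace_add, ← Matrix.mul_add, hαβ, Matrix.mul_one, Matrix.mul_assoc,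
    trace_mul_comm, Matrix.mul_assoc]

end Trace

lemma frobSq_smul {k l : ℕ} (c : ℂ) (A : Matrix (Fin k) (Fin l) ℂ) :
    frobSq (c • A) = Complex.normSq c * frobSq A := by
  simp [frobSq, Finset.mul_sum]

lemma taylorCoeff_zero {k l : ℕ} (g : ℂ → Matrix (Fin k) (Fin l) ℂ) : taylorCoeff g 0 = g 0 := by
  ext i j; simp [taylorCoeff]

lemma taylorCoeff_one {k l : ℕ} (g : ℂ → Matrix (Fin k) (Fin l) ℂ) :
    taylorCoeff g 1 = matDeriv g 0 := by
  ext i j; simp [taylorCoeff, matDeriv, iteratedDeriv_one]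

lemma hasSum_taylorCoeff {k l : ℕ} {g : ℂ → Matrix (Fin k) (Fin l) ℂ} (hg : matHol g)
    {w : ℂ} (hw : w ∈ unitDisk) : HasSum (fun m => w ^ m • taylorCoeff g m) (g w) := by
  refine Pi.hasSum.2 fun i => Pi.hasSum.2 fun j => ?_
  have h := Complex.hasSum_taylorSeries_on_ball (f := fun z => g z i j)
    (by rw [← unitDisk_eq_ball]; exact hg i j) (by rw [← unitDisk_eq_ball]; exact hw)
  convert h using 1
  · rfl
  funext m
  simp only [taylorCoeff, Matrix.smul_apply, of_apply, smul_eq_mul, sub_zero]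
  ring

lemma hasSum_trace_taylorCoeff {k l : ℕ} {g : ℂ → Matrix (Fin k) (Fin l) ℂ} (hg : matHol g)
    {w : ℂ} (hw : w ∈ unitDisk) (X : Matrix (Fin k) (Fin l) ℂ) :
    HasSum (fun m => w ^ m * trace (Xᴴ * taylorCoeff g m)) (trace (Xᴴ * g w)) := by
  let φ := (traceLinearMap (Fin l) ℂ ℂ).comp (mulLeftLinearMap (Fin l) ℂ Xᴴ)
  have hφ : Continuous φ := (continuous_const.matrix_mul continuous_id).matrix_trace
  convert (hasSum_taylorCoeff hg hw).map φ hφ using 1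
  · funext m
    simp [φ]
  · rfl

lemma matHol_mul {k l : ℕ} {F : ℂ → Matrix (Fin k) (Fin k) ℂ} {f : ℂ → Matrix (Fin k) (Fin l) ℂ}
    (hF : matHol F) (hf : matHol f) : matHol (fun z => F z * f z) := fun i j => by
  simp only [mul_apply]
  exact DifferentiableOn.fun_sum fun x _ => (hF i x).mul (hf x j)

lemma matDeriv_mul {k l : ℕ} {F : ℂ → Matrix (Fin k) (Fin k) ℂ}
    {f : ℂ → Matrix (Fin k) (Fin l) ℂ} (hF : matHol F) (hf : matHol f) {z : ℂ}
    (hz : z ∈ unitDisk) :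
    matDeriv (fun z => F z * f z) z = matDeriv F z * f z + F z * matDeriv f z := by
  have hnhds : unitDisk ∈ 𝓝 z := by
    rw [unitDisk_eq_ball] at hz ⊢
    exact Metric.isOpen_ball.mem_nhds hz
  ext i j
  simp only [matDeriv, of_apply, mul_apply, Matrix.add_apply, ← Finset.sum_add_distrib]
  exact (HasDerivAt.fun_sum fun x _ =>
    ((hF i x).differentiableAt hnhds).hasDerivAt.mul
      ((hf x j).differentiableAt hnhds).hasDerivAt).deriv

section Kernel

variable {k l l' : ℕ} (α β : Matrix (Fin l') (Fin l) ℂ) (X : Matrix (Fin k) (Fin l) ℂ) (w : ℂ)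

lemma mul_KabM (z : ℂ) :
    X * KabM α β z w = X * (α + w • β)ᴴ * α + z • (X * (α + w • β)ᴴ * β)
      + (conj w ^ 2 * z ^ 2 / (1 - conj w * z)) • X := by
  simp only [KabM, conjTranspose_add, conjTranspose_smul, Matrix.mul_add, Matrix.add_mul,
    Matrix.mul_smul, Matrix.smul_mul, Matrix.mul_one, Matrix.mul_assoc]
  rfl

lemma taylorCoeff_mul_KabM (m : ℕ) :
    taylorCoeff (fun z => X * KabM α β z w) m =
      if m = 0 then X * (α + w • β)ᴴ * α
      else if m = 1 then X * (α + w • β)ᴴ * β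
      else conj w ^ m • X := by
  ext i j
  simp only [taylorCoeff, of_apply, mul_KabM, Matrix.add_apply, Matrix.smul_apply, smul_eq_mul]
  rw [iteratedDeriv_quadratic_add_geometric]
  split_ifs <;> simp [Matrix.smul_apply]

variable {w}

lemma matHol_mul_KabM (hw : w ∈ unitDisk) : matHol (fun z => X * KabM α β z w) := by
  intro i j
  simp only [mul_KabM, Matrix.add_apply, Matrix.smul_apply, smul_eq_mul]
  have hden : ∀ z ∈ unitDisk, 1 - conj w * z ≠ 0 := fun z hz => one_sub_conj_mul_ne_zero_s11 hw hz
  fun_prop (disch := assumption)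

lemma summable_frobSq_taylorCoeff_mul_KabM (hw : w ∈ unitDisk) :
    Summable fun m => frobSq (taylorCoeff (fun z => X * KabM α β z w) m) := by
  have hw' : Complex.normSq w < 1 := by
    rw [Complex.normSq_eq_norm_sq]
    exact pow_lt_one₀ (norm_nonneg w) hw two_ne_zero
  refine ((summable_geometric_of_lt_one (Complex.normSq_nonneg w) hw').mul_right
    (frobSq X)).congr_atTop ?_
  filter_upwards [eventually_ge_atTop 2] with m hm
  rw [taylorCoeff_mul_KabM, if_neg (by omega), if_neg (by omega), frobSq_smul, map_pow,
    Complex.normSq_conj]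

lemma memH2ab_mul_KabM (hw : w ∈ unitDisk) : MemH2ab α β (fun z => X * KabM α β z w) := by
  refine ⟨⟨matHol_mul_KabM α β X hw, summable_frobSq_taylorCoeff_mul_KabM α β X hw⟩,
    X * (α + w • β)ᴴ, ?_, ?_⟩
  · exact (taylorCoeff_zero _).symm.trans (taylorCoeff_mul_KabM α β X w 0)
  · rw [← taylorCoeff_one, taylorCoeff_mul_KabM, if_neg one_ne_zero, if_pos rfl]

end Kernel

lemma hasSum_h2inner_mul_KabM {k l l' : ℕ} {α β : Matrix (Fin l') (Fin l) ℂ}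
    (hαβ : α * αᴴ + β * βᴴ = 1) {w : ℂ} (hw : w ∈ unitDisk) (X : Matrix (Fin k) (Fin l) ℂ)
    {g : ℂ → Matrix (Fin k) (Fin l) ℂ} (hg : matHol g) {U : Matrix (Fin k) (Fin l') ℂ}
    (h0 : g 0 = U * α) (h1 : matDeriv g 0 = U * β) :
    HasSum (fun m => trace ((taylorCoeff (fun z => X * KabM α β z w) m)ᴴ * taylorCoeff g m))
      (trace (Xᴴ * g w)) := by
  refine HasSum.congr_of_two_le (hasSum_trace_taylorCoeff hg hw X) ?_ fun m hm => ?_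
  · rw [taylorCoeff_mul_KabM, taylorCoeff_mul_KabM, taylorCoeff_zero, taylorCoeff_one, h0, h1,
      if_pos rfl, if_neg one_ne_zero, if_pos rfl,
      trace_conjTranspose_mul_add_of_coisometry hαβ]
    simp [Matrix.mul_add, Matrix.mul_smul, trace_add, trace_smul]
  · rw [taylorCoeff_mul_KabM, if_neg (by omega), if_neg (by omega), conjTranspose_smul,
      Matrix.smul_mul, trace_smul]
    simp

theorem stmt11_general (k l l' : ℕ)
    (α β : Matrix (Fin l') (Fin l) ℂ) (hG : MemG α β) :
    (∀ w ∈ unitDisk, ∀ X : Matrix (Fin k) (Fin l) ℂ,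
      MemH2ab α β (fun z => X * KabM α β z w)) ∧
    (∀ w ∈ unitDisk, ∀ X : Matrix (Fin k) (Fin l) ℂ,
      ∀ f : ℂ → Matrix (Fin k) (Fin l) ℂ, MemH2ab α β f →
        h2inner f (fun z => X * KabM α β z w) = Matrix.trace (Xᴴ * f w)) ∧
    (∀ F : ℂ → Matrix (Fin k) (Fin k) ℂ, MemHinf1 F →
      ∀ w ∈ unitDisk, ∀ X : Matrix (Fin k) (Fin l) ℂ,
        ∀ f : ℂ → Matrix (Fin k) (Fin l) ℂ, MemH2ab α β f →
          h2inner (fun z => F z * f z) (fun z => X * KabM α β z w) =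
            h2inner f (fun z => ((F w)ᴴ * X) * KabM α β z w)) := by
  refine ⟨fun w hw X => memH2ab_mul_KabM α β X hw, ?_, ?_⟩
  · rintro w hw X f ⟨⟨hf, -⟩, U, h0, h1⟩
    exact (hasSum_h2inner_mul_KabM hG.1 hw X hf h0 h1).tsum_eq
  · rintro F ⟨⟨hF, -⟩, hF0⟩ w hw X f ⟨⟨hf, -⟩, U, h0, h1⟩
    have hFf0 : F 0 * f 0 = F 0 * U * α := by rw [h0, Matrix.mul_assoc]
    have hFf1 : matDeriv (fun z => F z * f z) 0 = F 0 * U * β := by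
      rw [matDeriv_mul hF hf (by simp [unitDisk]), hF0, h1, Matrix.zero_mul, zero_add,
        Matrix.mul_assoc]
    rw [h2inner, h2inner,
      (hasSum_h2inner_mul_KabM hG.1 hw X (matHol_mul hF hf) hFf0 hFf1).tsum_eq,
      (hasSum_h2inner_mul_KabM hG.1 hw _ hf h0 h1).tsum_eq, conjTranspose_mul,
      conjTranspose_conjTranspose, Matrix.mul_assoc]

/-- Proposition 2.4.  `H²_{α,β}` is a reproducing kernel Hilbert
space with kernel `K^{α,β}`, and the adjoint of multiplication by
`F ∈ (H^∞_1)^{k×k}` acts on kernel elements by `X K^{α,β}(·,w) ↦ F(w)ᴴ X K^{α,β}(·,w)`. -/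
theorem stmt11 (k l l' : ℕ) (hl : 1 ≤ l) (hll' : l ≤ l') (hl'k : l' ≤ k)
    (α β : Matrix (Fin l') (Fin l) ℂ) (hG : MemG α β) :
    (∀ w ∈ unitDisk, ∀ X : Matrix (Fin k) (Fin l) ℂ,
      MemH2ab α β (fun z => X * KabM α β z w)) ∧
    (∀ w ∈ unitDisk, ∀ X : Matrix (Fin k) (Fin l) ℂ,
      ∀ f : ℂ → Matrix (Fin k) (Fin l) ℂ, MemH2ab α β f →
        h2inner f (fun z => X * KabM α β z w) = Matrix.trace (Xᴴ * f w)) ∧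
    (∀ F : ℂ → Matrix (Fin k) (Fin k) ℂ, MemHinf1 F →
      ∀ w ∈ unitDisk, ∀ X : Matrix (Fin k) (Fin l) ℂ,
        ∀ f : ℂ → Matrix (Fin k) (Fin l) ℂ, MemH2ab α β f →
          h2inner (fun z => F z * f z) (fun z => X * KabM α β z w) =
            h2inner f (fun z => ((F w)ᴴ * X) * KabM α β z w)) :=
  stmt11_general k l l' α β hG

end CNP
end
end

section
/- Let z₁, w₁ ∈ ℂ with |z₁| < 1 and |w₁| < 1. Set c = w₁·(1 − |z₁|⁴)/(1 − |z₁|⁴·|w₁|²) and r = |z₁|²·(1 − |w₁|²)/(1 − |z₁|⁴·|w₁|²). Then |c| + r < 1; in particular the closed disk {x ∈ ℂ : |x − c| ≤ r} is contained in the open unit disk 𝔻. -/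
open scoped ComplexConjugate ComplexOrder
open Matrix

noncomputable section

namespace CNP

/-!
With `a = |z₁|²` and `b = |w₁|` one has `|c| = b (1 - a²) / (1 - a² b²)` and
`r = a (1 - b²) / (1 - a² b²)`, and the identity
`(1 - a² b²) - b (1 - a²) - a (1 - b²) = (1 - a) (1 - b) (1 - a b)`
shows that `|c| + r < 1` as soon as `a, b ∈ [0, 1)`. A closed disk whose farthest point from
the origin lies at distance `|c| + r < 1` is contained in `𝔻`.
-/

lemma one_sub_sq_mul_sq_sub_eq (a b : ℝ) :
    1 - a ^ 2 * b ^ 2 - (b * (1 - a ^ 2) + a * (1 - b ^ 2)) = (1 - a) * (1 - b) * (1 - a * b) := by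
  ring

lemma sq_mul_sq_lt_one {a b : ℝ} (ha₀ : 0 ≤ a) (ha : a < 1) (hb₀ : 0 ≤ b) (hb : b < 1) :
    a ^ 2 * b ^ 2 < 1 := by
  rw [← mul_pow]
  exact pow_lt_one₀ (mul_nonneg ha₀ hb₀) (mul_lt_one_of_nonneg_of_lt_one_left ha₀ ha hb.le)
    two_ne_zero

lemma div_add_div_one_sub_sq_mul_sq_lt_one {a b : ℝ} (ha₀ : 0 ≤ a) (ha : a < 1)
    (hb₀ : 0 ≤ b) (hb : b < 1) :
    b * (1 - a ^ 2) / (1 - a ^ 2 * b ^ 2) + a * (1 - b ^ 2) / (1 - a ^ 2 * b ^ 2) < 1 := by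
  have hden : 0 < 1 - a ^ 2 * b ^ 2 := sub_pos.mpr (sq_mul_sq_lt_one ha₀ ha hb₀ hb)
  have hab : a * b < 1 := mul_lt_one_of_nonneg_of_lt_one_left ha₀ ha hb.le
  have hgap : 0 < (1 - a) * (1 - b) * (1 - a * b) := by
    apply mul_pos (mul_pos _ _) <;> linarith
  rw [← add_div, div_lt_one hden]
  linarith [one_sub_sq_mul_sq_sub_eq a b]

lemma norm_mul_ofReal_div_ofReal (w : ℂ) {u v : ℝ} (hu : 0 ≤ u) (hv : 0 ≤ v) :
    ‖w * (u : ℂ) / (v : ℂ)‖ = ‖w‖ * u / v := by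
  rw [norm_div, norm_mul, Complex.norm_of_nonneg hu, Complex.norm_of_nonneg hv]

lemma setOf_norm_sub_le_subset_unitDisk {c : ℂ} {r : ℝ} (h : ‖c‖ + r < 1) :
    {x : ℂ | ‖x - c‖ ≤ r} ⊆ unitDisk := by
  have hball : Metric.closedBall c r ⊆ Metric.ball 0 1 :=
    Metric.closedBall_subset_ball' (by rwa [dist_zero_right, add_comm])
  intro x hx
  show ‖x‖ < 1
  exact mem_ball_zero_iff.mp (hball (mem_closedBall_iff_norm.mpr hx))

/-- The disk of admissible parameters for the one-point constrained
Nevanlinna-Pick problem is contained in the open unit disk: `|c| + r < 1`. -/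
theorem stmt19 (z₁ w₁ : ℂ) (hz : ‖z₁‖ < 1) (hw : ‖w₁‖ < 1)
    (c : ℂ) (r : ℝ)
    (hc : c = w₁ * ((1 - ‖z₁‖ ^ 4 : ℝ) : ℂ) /
      ((1 - ‖z₁‖ ^ 4 * ‖w₁‖ ^ 2 : ℝ) : ℂ))
    (hr : r = ‖z₁‖ ^ 2 * (1 - ‖w₁‖ ^ 2) /
      (1 - ‖z₁‖ ^ 4 * ‖w₁‖ ^ 2)) :
    ‖c‖ + r < 1 ∧ {x : ℂ | ‖x - c‖ ≤ r} ⊆ unitDisk := by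
  set a := ‖z₁‖ ^ 2
  have ha₀ : 0 ≤ a := by positivity
  have ha : a < 1 := pow_lt_one₀ (norm_nonneg _) hz two_ne_zero
  have hpow : ‖z₁‖ ^ 4 = a ^ 2 := by ring
  have hnum : 0 ≤ 1 - a ^ 2 := sub_nonneg.mpr (pow_le_one₀ ha₀ ha.le)
  have hden : 0 ≤ 1 - a ^ 2 * ‖w₁‖ ^ 2 :=
    sub_nonneg.mpr (sq_mul_sq_lt_one ha₀ ha (norm_nonneg _) hw).le
  have hnorm_c : ‖c‖ = ‖w₁‖ * (1 - a ^ 2) / (1 - a ^ 2 * ‖w₁‖ ^ 2) := by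
    rw [hc, hpow, norm_mul_ofReal_div_ofReal _ hnum hden]
  have hsum : ‖c‖ + r < 1 := by
    rw [hnorm_c, hr, hpow]
    exact div_add_div_one_sub_sq_mul_sq_lt_one ha₀ ha (norm_nonneg _) hw
  exact ⟨hsum, setOf_norm_sub_le_subset_unitDisk hsum⟩

end CNP
end
end
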